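/- arXiv:1610.00853 — 5 statements merged into one kernel-verified Lean document; each statement's English description precedes it below -/
import Mathlib

section
/- Let G be a connected (2K_2, C_3, C_4)-free graph (a connected finite simple graph with no induced 2K_2, no induced C_3 and no induced C_4) and let S be a minimal vertex separator of G. Then S is an independent set of G (no two vertices of S are adjacent). -/
variable {V : Type*}

/-- The graph `G − S`: delete the vertices of `S` (they become isolated). -/
def SimpleGraph.removeVerts (G : SimpleGraph V) (S : Set V) : SimpleGraph V where
  Adj u v := G.Adj u v ∧ u ∉ S ∧ v ∉ S
  symm := ⟨fun u v ⟨h, hu, hv⟩ => ⟨h.symm, hv, hu⟩⟩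
  loopless := ⟨fun u ⟨h, _, _⟩ => G.loopless.irrefl u h⟩

/-- `S` is a minimal vertex separator of `G`: some `a, b ∉ S` lie in different
connected components of `G − S`, while for every proper subset `S' ⊊ S` they lie
in the same connected component of `G − S'`. -/
def SimpleGraph.IsMinSep (G : SimpleGraph V) (S : Set V) : Prop :=
  ∃ a b : V, a ∉ S ∧ b ∉ S ∧ ¬ (G.removeVerts S).Reachable a b ∧
    ∀ S' : Set V, S' ⊂ S → (G.removeVerts S').Reachable a b

/-- `C` is (the vertex set of) a connected component of `G − S`. -/
def SimpleGraph.IsCompOf (G : SimpleGraph V) (S : Set V) (C : Set V) : Prop :=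
  ∃ u : V, u ∉ S ∧ C = {v : V | (G.removeVerts S).Reachable u v ∧ v ∉ S}

/-- `G` has no induced `2K₂`. -/
def SimpleGraph.TwoK2Free (G : SimpleGraph V) : Prop :=
  ¬ ∃ a b c d : V, a ≠ b ∧ a ≠ c ∧ a ≠ d ∧ b ≠ c ∧ b ≠ d ∧ c ≠ d ∧
    G.Adj a b ∧ G.Adj c d ∧ ¬ G.Adj a c ∧ ¬ G.Adj a d ∧ ¬ G.Adj b c ∧ ¬ G.Adj b d

/-- `G` has an induced cycle on `k` vertices, all of them lying in `A`. -/
def SimpleGraph.HasInducedCycleOn (G : SimpleGraph V) (A : Set V) (k : ℕ) [NeZero k] : Prop :=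
  ∃ f : Fin k → V, Function.Injective f ∧ (∀ i, f i ∈ A) ∧
    ∀ i j : Fin k, G.Adj (f i) (f j) ↔ (j = i + 1 ∨ i = j + 1)

/-- `G` has no induced cycle on `k` vertices. -/
def SimpleGraph.CkFree (G : SimpleGraph V) (k : ℕ) [NeZero k] : Prop :=
  ¬ G.HasInducedCycleOn Set.univ k

/-- `F` is a feedback vertex set of `G`: `G − F` contains no cycle. -/
def SimpleGraph.IsFVS (G : SimpleGraph V) (F : Set V) : Prop :=
  (G.removeVerts F).IsAcyclic

/-- The minimum cardinality of a feedback vertex set of `G`. -/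
noncomputable def SimpleGraph.minFVS (G : SimpleGraph V) : ℕ :=
  sInf {n : ℕ | ∃ F : Set V, G.IsFVS F ∧ F.ncard = n}

/-! If `u, v ∈ S` were adjacent, minimality gives each of them a neighbour in both components
of `G − S` that `S` separates. Triangle-freeness makes the two neighbours in
each component distinct, so both components contain an edge; as there are no edges between the
components, these two edges induce a `2K₂`. -/

namespace SimpleGraph

theorem CkFree.cliqueFree_three {G : SimpleGraph V} (h : G.CkFree 3) : G.CliqueFree 3 := by
  classical
  intro t ht
  obtain ⟨x, y, z, hxy, hxz, hyz, -⟩ := is3Clique_iff.1 ht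
  refine h ⟨![x, y, z], ?_, fun _ => trivial, ?_⟩
  · intro i j hij
    fin_cases i <;> fin_cases j <;> simp_all [hxy.ne, hxz.ne, hyz.ne]
  · intro i j
    fin_cases i <;> fin_cases j <;>
      simp [hxy, hxz, hyz, hxy.symm, hxz.symm, hyz.symm]

theorem exists_adj_of_reachable_ne {H : SimpleGraph V} {a p r : V} (hp : H.Reachable a p)
    (hr : H.Reachable a r) (hpr : p ≠ r) : ∃ c, H.Adj a c := by
  obtain ⟨z, hz, hza⟩ : ∃ z, H.Reachable a z ∧ a ≠ z := by
    by_cases hap : a = p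
    · exact ⟨r, hr, hap ▸ hpr⟩
    · exact ⟨p, hp, hap⟩
  obtain ⟨w⟩ := hz
  exact ⟨w.snd, w.adj_snd (Walk.not_nil_of_ne hza)⟩

/-- Along a path avoiding `S \ {s}` that leaves the component of its start in `G − S`,
the first vertex outside that component is `s`. -/
theorem exists_adj_reachable_of_reachable_removeVerts_diff {G : SimpleGraph V} {S : Set V}
    {s x y : V} (hreach : (G.removeVerts (S \ {s})).Reachable x y) (hx : x ∉ S)
    (hxy : ¬ (G.removeVerts S).Reachable x y) :
    ∃ p, G.Adj s p ∧ (G.removeVerts S).Reachable x p := by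
  obtain ⟨w⟩ := hreach
  induction w with
  | nil => exact absurd Reachable.rfl hxy
  | @cons x c y hxc w ih =>
    by_cases hcs : c = s
    · exact ⟨x, hcs ▸ hxc.1.symm, Reachable.rfl⟩
    · have hxc' : (G.removeVerts S).Adj x c := ⟨hxc.1, hx, fun hc => hxc.2.2 ⟨hc, hcs⟩⟩
      obtain ⟨p, hsp, hcp⟩ := ih hxc'.2.2 fun hcy => hxy (hxc'.reachable.trans hcy)
      exact ⟨p, hsp, hxc'.reachable.trans hcp⟩

theorem TwoK2Free.reachable_removeVerts_of_adj {G : SimpleGraph V} {S : Set V} {a b c d : V}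
    (h : G.TwoK2Free) (hac : (G.removeVerts S).Adj a c) (hbd : (G.removeVerts S).Adj b d) :
    (G.removeVerts S).Reachable a b := by
  by_contra hab
  have apart : ∀ ⦃x⦄, (G.removeVerts S).Reachable a x → x ∉ S →
      ∀ ⦃y⦄, (G.removeVerts S).Reachable b y → y ∉ S → x ≠ y ∧ ¬ G.Adj x y := by
    intro x hax hx y hby hy
    refine ⟨?_, fun hxy => ?_⟩
    · rintro rfl
      exact hab (hax.trans hby.symm)
    · exact hab (hax.trans ((show (G.removeVerts S).Adj x y from ⟨hxy, hx, hy⟩).reachable.trans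
        hby.symm))
  have ha := apart Reachable.rfl hac.2.1
  have hc := apart hac.reachable hac.2.2
  exact h ⟨a, c, b, d, hac.1.ne, (ha .rfl hbd.2.1).1, (ha hbd.reachable hbd.2.2).1,
    (hc .rfl hbd.2.1).1, (hc hbd.reachable hbd.2.2).1, hbd.1.ne, hac.1, hbd.1,
    (ha .rfl hbd.2.1).2, (ha hbd.reachable hbd.2.2).2,
    (hc .rfl hbd.2.1).2, (hc hbd.reachable hbd.2.2).2⟩

theorem CkFree.exists_removeVerts_adj_of_adj {G : SimpleGraph V} {S : Set V} {u v x y : V}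
    (hc3 : G.CkFree 3) (huv : G.Adj u v) (hu : u ∈ S) (hv : v ∈ S) (hx : x ∉ S)
    (hxy : ¬ (G.removeVerts S).Reachable x y)
    (hmin : ∀ s ∈ S, (G.removeVerts (S \ {s})).Reachable x y) :
    ∃ c, (G.removeVerts S).Adj x c := by
  classical
  obtain ⟨p, hup, hxp⟩ := exists_adj_reachable_of_reachable_removeVerts_diff (hmin u hu) hx hxy
  obtain ⟨r, hvr, hxr⟩ := exists_adj_reachable_of_reachable_removeVerts_diff (hmin v hv) hx hxy
  refine exists_adj_of_reachable_ne hxp hxr ?_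
  rintro rfl
  exact hc3.cliqueFree_three _ (is3Clique_triple_iff.2 ⟨huv, hup, hvr⟩)

end SimpleGraph

theorem stmt0_general (G : SimpleGraph V) (S : Set V)
    (h2k2 : G.TwoK2Free) (hc3 : G.CkFree 3)
    (hS : G.IsMinSep S) :
    ∀ u ∈ S, ∀ v ∈ S, ¬ G.Adj u v := by
  obtain ⟨a, b, ha, hb, hab, hmin⟩ := hS
  intro u hu v hv huv
  have hmin' : ∀ s ∈ S, (G.removeVerts (S \ {s})).Reachable a b :=
    fun s hs => hmin _ (Set.sdiff_singleton_ssubset.2 hs)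
  obtain ⟨c, hac⟩ := hc3.exists_removeVerts_adj_of_adj huv hu hv ha hab hmin'
  obtain ⟨d, hbd⟩ := hc3.exists_removeVerts_adj_of_adj huv hu hv hb (fun hba => hab hba.symm)
    fun s hs => (hmin' s hs).symm
  exact hab (h2k2.reachable_removeVerts_of_adj hac hbd)

theorem stmt0 [Fintype V] (G : SimpleGraph V) (S : Set V)
    (hconn : G.Connected) (h2k2 : G.TwoK2Free) (hc3 : G.CkFree 3) (hc4 : G.CkFree 4)
    (hS : G.IsMinSep S) :
    ∀ u ∈ S, ∀ v ∈ S, ¬ G.Adj u v :=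
  stmt0_general G S h2k2 hc3 hS
end

section
/- Let G be a connected (2K_2, C_3, C_4)-free graph (a connected finite simple graph with no induced 2K_2, no induced C_3 and no induced C_4) and let S be a minimal vertex separator of G with |S| > 1. Then G − S has exactly one trivial component, i.e., exactly one connected component of G − S consists of a single vertex. -/
/-!
If `a` and `b` are separated by the minimal separator `S`, every `s ∈ S` has a neighbour in the
components of both `a` and `b`. An edge at `a` and an edge at `b` outside `S` would form an induced
`2K₂`, so one of them, say `a`, is a trivial component; then `N(a) = S`, and `S` is independent
since `G` has no triangle. If `u ≠ a` were another trivial component, pick a neighbour `s ∈ S`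
of `u` (by connectivity) and `t ∈ S \ {s}` with a neighbour `y ≠ a` outside `S`. The squares
`a s u t` and `a s y t` are not induced `C₄`s, so `u ≁ t` and `s ≁ y`, and `us`, `ty` form an
induced `2K₂`.
-/

variable {V : Type*}

namespace SimpleGraph

variable {G : SimpleGraph V} {S : Set V} {a b u v : V}

lemma hasInducedCycleOn_univ_three_of_adj {c : V} (h₁ : G.Adj a b) (h₂ : G.Adj b c)
    (h₃ : G.Adj a c) : G.HasInducedCycleOn Set.univ 3 := by
  have := h₁.ne; have := h₂.ne; have := h₃.ne
  refine ⟨![a, b, c], ?_, fun _ => Set.mem_univ _, ?_⟩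
  · intro i j hij
    fin_cases i <;> fin_cases j <;> simp_all
  · intro i j
    fin_cases i <;> fin_cases j <;> simp_all [h₁.symm, h₂.symm, h₃.symm]

lemma hasInducedCycleOn_univ_four_of_adj {c d : V} (hab : G.Adj a b) (hbc : G.Adj b c)
    (hcd : G.Adj c d) (hda : G.Adj d a) (hac : ¬ G.Adj a c) (hbd : ¬ G.Adj b d)
    (hac' : a ≠ c) (hbd' : b ≠ d) : G.HasInducedCycleOn Set.univ 4 := by
  have := hab.ne; have := hbc.ne; have := hcd.ne; have := hda.ne
  have hca : ¬ G.Adj c a := fun h => hac h.symm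
  have hdb : ¬ G.Adj d b := fun h => hbd h.symm
  refine ⟨![a, b, c, d], ?_, fun _ => Set.mem_univ _, ?_⟩
  · intro i j hij
    fin_cases i <;> fin_cases j <;> simp_all
  · intro i j
    fin_cases i <;> fin_cases j <;> simp_all [hab.symm, hbc.symm, hcd.symm, hda.symm]

lemma removeVerts_reachable_of_adj (h : G.Adj u v) (hu : u ∉ S) (hv : v ∉ S) :
    (G.removeVerts S).Reachable u v :=
  (show (G.removeVerts S).Adj u v from ⟨h, hu, hv⟩).reachable

lemma eq_of_removeVerts_reachable (ha : G.neighborSet a ⊆ S)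
    (h : (G.removeVerts S).Reachable a v) : v = a := by
  obtain ⟨p⟩ := h
  cases p with
  | nil => rfl
  | cons h _ => exact absurd (ha h.1) h.2.2

lemma isCompOf_singleton_iff : G.IsCompOf S {u} ↔ u ∉ S ∧ G.neighborSet u ⊆ S := by
  constructor
  · rintro ⟨w, -, hC⟩
    obtain ⟨hwu, hu⟩ : u ∈ {v | (G.removeVerts S).Reachable w v ∧ v ∉ S} :=
      hC ▸ Set.mem_singleton u
    refine ⟨hu, fun x hux => by_contra fun hx => hux.ne ?_⟩
    have : x ∈ ({u} : Set V) := hC ▸ ⟨hwu.trans (removeVerts_reachable_of_adj hux hu hx), hx⟩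
    exact this.symm
  · rintro ⟨hu, huS⟩
    refine ⟨u, hu, Set.ext fun v => ⟨?_, fun hv => eq_of_removeVerts_reachable huS hv.1⟩⟩
    rintro rfl
    exact ⟨Reachable.refl _, hu⟩

lemma ne_and_not_adj_of_not_reachable {p q : V} (hab : ¬ (G.removeVerts S).Reachable a b)
    (hp : (G.removeVerts S).Reachable a p) (hq : (G.removeVerts S).Reachable b q)
    (hpS : p ∉ S) (hqS : q ∉ S) : p ≠ q ∧ ¬ G.Adj p q := by
  refine ⟨?_, fun h => hab (hp.trans ((removeVerts_reachable_of_adj h hpS hqS).trans hq.symm))⟩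
  rintro rfl
  exact hab (hp.trans hq.symm)

lemma exists_adj_of_reachable_sdiff {s : V} (ha : a ∉ S)
    (hab : ¬ (G.removeVerts S).Reachable a b) (h : (G.removeVerts (S \ {s})).Reachable a b) :
    ∃ x, (G.removeVerts S).Reachable a x ∧ x ∉ S ∧ G.Adj x s := by
  obtain ⟨p⟩ := h
  induction p with
  | nil => exact absurd (Reachable.refl _) hab
  | @cons a c b hac _ ih =>
    obtain ⟨hac, -, hc⟩ := hac
    by_cases hcs : c = s
    · exact ⟨a, Reachable.refl _, ha, hcs ▸ hac⟩
    · have hc : c ∉ S := fun hcS => hc ⟨hcS, hcs⟩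
      have hr := removeVerts_reachable_of_adj hac ha hc
      obtain ⟨x, hcx, hx, hxs⟩ := ih hc fun hcb => hab (hr.trans hcb)
      exact ⟨x, hr.trans hcx, hx, hxs⟩

lemma TwoK2Free.neighborSet_subset_or (h2k2 : G.TwoK2Free) (ha : a ∉ S) (hb : b ∉ S)
    (hab : ¬ (G.removeVerts S).Reachable a b) :
    G.neighborSet a ⊆ S ∨ G.neighborSet b ⊆ S := by
  by_contra! h
  obtain ⟨⟨x, hax, hx⟩, ⟨y, hby, hy⟩⟩ := And.imp Set.not_subset.1 Set.not_subset.1 h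
  have hx' := removeVerts_reachable_of_adj hax ha hx
  have hy' := removeVerts_reachable_of_adj hby hb hy
  obtain ⟨hab₁, hab₂⟩ := ne_and_not_adj_of_not_reachable hab .rfl .rfl ha hb
  obtain ⟨hay₁, hay₂⟩ := ne_and_not_adj_of_not_reachable hab .rfl hy' ha hy
  obtain ⟨hxb₁, hxb₂⟩ := ne_and_not_adj_of_not_reachable hab hx' .rfl hx hb
  obtain ⟨hxy₁, hxy₂⟩ := ne_and_not_adj_of_not_reachable hab hx' hy' hx hy
  exact h2k2 ⟨a, x, b, y, hax.ne, hab₁, hay₁, hxb₁, hxy₁, hby.ne, hax, hby,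
    hab₂, hay₂, hxb₂, hxy₂⟩

lemma eq_of_neighborSet_subset (hconn : G.Connected) (h2k2 : G.TwoK2Free) (hc3 : G.CkFree 3)
    (hc4 : G.CkFree 4) (hcard : 1 < S.ncard) (ha : a ∉ S) (hb : b ∉ S)
    (hab : ¬ (G.removeVerts S).Reachable a b)
    (hmin : ∀ S' : Set V, S' ⊂ S → (G.removeVerts S').Reachable a b)
    (haS : G.neighborSet a ⊆ S) (hu : u ∉ S) (huS : G.neighborSet u ⊆ S) : u = a := by
  have hSa : ∀ s ∈ S, G.Adj a s := fun s hs => by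
    obtain ⟨x, hax, -, hxs⟩ :=
      exists_adj_of_reachable_sdiff ha hab (hmin _ (Set.sdiff_singleton_ssubset.2 hs))
    exact eq_of_removeVerts_reachable haS hax ▸ hxs
  have hSb : ∀ s ∈ S, ∃ y, y ∉ S ∧ y ≠ a ∧ G.Adj s y := fun s hs => by
    obtain ⟨y, hby, hy, hys⟩ := exists_adj_of_reachable_sdiff hb (fun h => hab h.symm)
      (hmin _ (Set.sdiff_singleton_ssubset.2 hs)).symm
    exact ⟨y, hy, (ne_and_not_adj_of_not_reachable hab .rfl hby ha hy).1.symm, hys.symm⟩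
  by_contra hua
  obtain ⟨s, hus⟩ : ∃ s, G.Adj u s := by
    obtain ⟨w⟩ := hconn.preconnected u a
    exact ⟨_, w.adj_snd (w.not_nil_of_ne hua)⟩
  have hs := huS hus
  obtain ⟨t, ht, hts⟩ := S.exists_ne_of_one_lt_ncard hcard s
  obtain ⟨y, hy, hya, hty⟩ := hSb t ht
  have hst : ¬ G.Adj s t := fun h =>
    hc3 (hasInducedCycleOn_univ_three_of_adj (hSa s hs) h (hSa t ht))
  have hut : ¬ G.Adj u t := fun h =>
    hc4 (hasInducedCycleOn_univ_four_of_adj (hSa s hs) hus.symm h (hSa t ht).symm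
      (fun h' => hu (haS h')) hst (Ne.symm hua) hts.symm)
  have hsy : ¬ G.Adj s y := fun h =>
    hc4 (hasInducedCycleOn_univ_four_of_adj (hSa s hs) h hty.symm (hSa t ht).symm
      (fun h' => hy (haS h')) hst hya.symm hts.symm)
  exact h2k2 ⟨u, s, t, y, hus.ne, fun h => hu (h ▸ ht), fun h => hut (h ▸ hty.symm),
    hts.symm, fun h => hy (h ▸ hs), hty.ne, hus, hty, hut, fun h => hy (huS h), hst, hsy⟩

lemma existsUnique_isCompOf_singleton (hconn : G.Connected) (h2k2 : G.TwoK2Free)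
    (hc3 : G.CkFree 3) (hc4 : G.CkFree 4) (hcard : 1 < S.ncard) (ha : a ∉ S) (hb : b ∉ S)
    (hab : ¬ (G.removeVerts S).Reachable a b)
    (hmin : ∀ S' : Set V, S' ⊂ S → (G.removeVerts S').Reachable a b)
    (haS : G.neighborSet a ⊆ S) : ∃! C : Set V, G.IsCompOf S C ∧ ∃ v, C = {v} := by
  refine ⟨{a}, ⟨isCompOf_singleton_iff.2 ⟨ha, haS⟩, a, rfl⟩, ?_⟩
  rintro C ⟨hC, u, rfl⟩
  obtain ⟨hu, huS⟩ := isCompOf_singleton_iff.1 hC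
  rw [eq_of_neighborSet_subset hconn h2k2 hc3 hc4 hcard ha hb hab hmin haS hu huS]

end SimpleGraph

theorem stmt1_general (G : SimpleGraph V) (S : Set V)
    (hconn : G.Connected) (h2k2 : G.TwoK2Free) (hc3 : G.CkFree 3) (hc4 : G.CkFree 4)
    (hS : G.IsMinSep S) (hcard : 1 < S.ncard) :
    ∃! C : Set V, G.IsCompOf S C ∧ ∃ v, C = {v} := by
  obtain ⟨a, b, ha, hb, hab, hmin⟩ := hS
  rcases h2k2.neighborSet_subset_or ha hb hab with haS | hbS
  · exact G.existsUnique_isCompOf_singleton hconn h2k2 hc3 hc4 hcard ha hb hab hmin haS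
  · exact G.existsUnique_isCompOf_singleton hconn h2k2 hc3 hc4 hcard hb ha
      (fun h => hab h.symm) (fun S' h => (hmin S' h).symm) hbS

theorem stmt1 [Fintype V] (G : SimpleGraph V) (S : Set V)
    (hconn : G.Connected) (h2k2 : G.TwoK2Free) (hc3 : G.CkFree 3) (hc4 : G.CkFree 4)
    (hS : G.IsMinSep S) (hcard : 1 < S.ncard) :
    ∃! C : Set V, G.IsCompOf S C ∧ ∃ v, C = {v} :=
  stmt1_general G S hconn h2k2 hc3 hc4 hS hcard
end

section
/- Let G be a connected (2K_2, C_3, C_4)-free graph (a connected finite simple graph with no induced 2K_2, no induced C_3 and no induced C_4), let S be a minimal vertex separator of G, and let G_1 be a non-trivial connected component of G − S. Then for every edge {u, v} of G with u, v ∈ V(G_1), the sets N_G(u) ∩ S and N_G(v) ∩ S are disjoint and their union is S. Consequently, for every vertex x ∈ S, the set N_G(x) ∩ V(G_1) is an independent set of G. -/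
variable {V : Type*}

/-!
An edge `uv` inside a component of `G − S` cannot see a common vertex of `S`, since that would
be a triangle. Conversely, every `x ∈ S` has, by minimality of `S`, a neighbour `p` in a
component of `G − S` other than the one containing `uv`; if `x` were adjacent to neither `u`
nor `v`, the edges `uv` and `xp` would induce a `2K₂`.
-/

namespace SimpleGraph

variable {G : SimpleGraph V} {S : Set V} {a b c x : V}

theorem CkFree.not_adj_of_adj_of_adj (h : G.CkFree 3) (hab : G.Adj a b) (hbc : G.Adj b c) :
    ¬ G.Adj a c := by
  intro hac
  refine h ⟨![a, b, c], ?_, fun _ => trivial, ?_⟩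
  · intro i j hij
    fin_cases i <;> fin_cases j <;>
      simp_all [hab.ne, hbc.ne, hac.ne, hab.ne', hbc.ne', hac.ne']
  · intro i j
    fin_cases i <;> fin_cases j <;>
      simp [hab, hbc, hac, hab.symm, hbc.symm, hac.symm]

theorem Adj.removeVerts_reachable (h : G.Adj a b) (ha : a ∉ S) (hb : b ∉ S) :
    (G.removeVerts S).Reachable a b :=
  Adj.reachable (G := G.removeVerts S) ⟨h, ha, hb⟩

theorem Reachable.removeVerts_or_exists_adj
    (h : (G.removeVerts (S \ {x})).Reachable a b) (ha : a ∉ S) :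
    (G.removeVerts S).Reachable a b ∨
      ∃ p, p ∉ S ∧ G.Adj p x ∧ (G.removeVerts S).Reachable a p := by
  obtain ⟨w⟩ := h
  induction w with
  | nil => exact Or.inl .rfl
  | @cons a c b hac _ ih =>
    obtain ⟨hac, -, hc⟩ := hac
    by_cases hcx : c = x
    · exact Or.inr ⟨a, ha, hcx ▸ hac, .rfl⟩
    have hcS : c ∉ S := fun hcS => hc ⟨hcS, hcx⟩
    have hstep := hac.removeVerts_reachable ha hcS
    rcases ih hcS with hcb | ⟨p, hp, hpx, hcp⟩
    · exact Or.inl (hstep.trans hcb)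
    · exact Or.inr ⟨p, hp, hpx, hstep.trans hcp⟩

theorem IsMinSep.exists_adj_not_reachable (hS : G.IsMinSep S) (hx : x ∈ S) (u : V) :
    ∃ p, p ∉ S ∧ G.Adj p x ∧ ¬ (G.removeVerts S).Reachable u p := by
  obtain ⟨a, b, haS, hbS, hab, hmin⟩ := hS
  have hreach := hmin (S \ {x}) (Set.sdiff_singleton_ssubset.mpr hx)
  have key : ∀ c d, c ∉ S → (G.removeVerts (S \ {x})).Reachable c d →
      ¬ (G.removeVerts S).Reachable c d → ¬ (G.removeVerts S).Reachable u c →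
      ∃ p, p ∉ S ∧ G.Adj p x ∧ ¬ (G.removeVerts S).Reachable u p := by
    intro c d hc hcd hncd huc
    obtain ⟨p, hp, hpx, hcp⟩ := (hcd.removeVerts_or_exists_adj hc).resolve_left hncd
    exact ⟨p, hp, hpx, fun hup => huc (hup.trans hcp.symm)⟩
  by_cases hua : (G.removeVerts S).Reachable u a
  · exact key b a hbS hreach.symm (fun h => hab h.symm) fun hub => hab (hua.symm.trans hub)
  · exact key a b haS hreach hab hua

theorem IsMinSep.adj_or_adj_of_adj (hS : G.IsMinSep S) (h2k2 : G.TwoK2Free) (hx : x ∈ S)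
    (hab : G.Adj a b) (ha : a ∉ S) (hb : b ∉ S) : G.Adj a x ∨ G.Adj b x := by
  by_contra! hno
  obtain ⟨p, hp, hpx, hap⟩ := hS.exists_adj_not_reachable hx a
  have hbp : ¬ (G.removeVerts S).Reachable b p :=
    fun hbp => hap ((hab.removeVerts_reachable ha hb).trans hbp)
  exact h2k2 ⟨a, b, x, p, hab.ne, (fun h => ha (h ▸ hx)), (fun h => hap (h ▸ .rfl)),
    (fun h => hb (h ▸ hx)), (fun h => hbp (h ▸ .rfl)), (fun h => hp (h ▸ hx)),
    hab, hpx.symm, hno.1, fun h => hap (h.removeVerts_reachable ha hp),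
    hno.2, fun h => hbp (h.removeVerts_reachable hb hp)⟩

theorem IsCompOf.notMem (hC : G.IsCompOf S C) {v : V} (hv : v ∈ C) : v ∉ S := by
  obtain ⟨_, _, rfl⟩ := hC
  exact hv.2

end SimpleGraph

open SimpleGraph in
theorem stmt2_general (G : SimpleGraph V) (S C : Set V)
    (h2k2 : G.TwoK2Free) (hc3 : G.CkFree 3)
    (hS : G.IsMinSep S) (hC : G.IsCompOf S C) :
    (∀ u ∈ C, ∀ v ∈ C, G.Adj u v →
      (G.neighborSet u ∩ S) ∩ (G.neighborSet v ∩ S) = ∅ ∧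
      (G.neighborSet u ∩ S) ∪ (G.neighborSet v ∩ S) = S) ∧
    (∀ x ∈ S, ∀ u ∈ G.neighborSet x ∩ C, ∀ v ∈ G.neighborSet x ∩ C, ¬ G.Adj u v) := by
  refine ⟨fun u hu v hv huv => ⟨?_, ?_⟩, fun x _ u hu v hv => ?_⟩
  · refine Set.eq_empty_of_forall_notMem fun x ⟨⟨hux, _⟩, hvx, _⟩ => ?_
    exact hc3.not_adj_of_adj_of_adj huv hvx hux
  · refine Set.Subset.antisymm (Set.union_subset (fun _ h => h.2) fun _ h => h.2) fun x hx => ?_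
    rcases hS.adj_or_adj_of_adj h2k2 hx huv (hC.notMem hu) (hC.notMem hv) with h | h
    · exact Or.inl ⟨h, hx⟩
    · exact Or.inr ⟨h, hx⟩
  · exact hc3.not_adj_of_adj_of_adj hu.1.symm hv.1

theorem stmt2 [Fintype V] (G : SimpleGraph V) (S C : Set V)
    (hconn : G.Connected) (h2k2 : G.TwoK2Free) (hc3 : G.CkFree 3) (hc4 : G.CkFree 4)
    (hS : G.IsMinSep S) (hC : G.IsCompOf S C) (hnt : ¬ ∃ v, C = {v}) :
    (∀ u ∈ C, ∀ v ∈ C, G.Adj u v →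
      (G.neighborSet u ∩ S) ∩ (G.neighborSet v ∩ S) = ∅ ∧
      (G.neighborSet u ∩ S) ∪ (G.neighborSet v ∩ S) = S) ∧
    (∀ x ∈ S, ∀ u ∈ G.neighborSet x ∩ C, ∀ v ∈ G.neighborSet x ∩ C, ¬ G.Adj u v) :=
  stmt2_general G S C h2k2 hc3 hS hC
end

section
/- Let G be a connected (2K_2, C_4, C_5)-free graph (a connected finite simple graph with no induced 2K_2, no induced C_4 and no induced C_5) and let S be a minimal vertex separator of G such that every connected component of G − S is trivial. Then the minimum cardinality of a feedback vertex set of G equals |S| − 1; indeed S \ {v} is a minimum feedback vertex set for some v ∈ S. -/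
variable {V : Type*}

/-!
Let `a`, `b` be vertices separated by `S`. Since all components of `G − S` are trivial, every
edge meets `S`; minimality of `S` then forces each `s ∈ S` to be adjacent to both `a` and `b`.
Two non-adjacent `s, t ∈ S` would give the induced cycle `a s b t`, so `S ∪ {a}` is a clique
on `|S| + 1` vertices, and a feedback vertex set must contain all but two of them. Conversely
`G − (S \ {v})` is a star centred at `v`.
-/

namespace SimpleGraph

variable {G H : SimpleGraph V} {S F K : Set V} {a b s t v : V}

@[simp] lemma removeVerts_empty (G : SimpleGraph V) : G.removeVerts ∅ = G := by
  ext u v; simp [removeVerts]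

lemma isAcyclic_of_forall_adj_eq_or_eq (h : ∀ x y, H.Adj x y → x = v ∨ y = v) :
    H.IsAcyclic :=
  (isAcyclic_starGraph v).anti fun x y hxy => starGraph_adj.2 ⟨hxy.ne, h x y hxy⟩

lemma IsAcyclic.ncard_le_two_of_isClique (hH : H.IsAcyclic) (hK : H.IsClique K) :
    K.ncard ≤ 2 := by
  classical
  by_contra! hlt
  have hfin : K.Finite := Set.finite_of_ncard_pos (by omega)
  obtain ⟨x, hx, y, hy, z, hz, hxy, hxz, hyz⟩ := (Set.two_lt_ncard hfin).1 hlt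
  exact hH.cliqueFree le_rfl {x, y, z}
    (is3Clique_triple_iff.2 ⟨hK hx hy hxy, hK hx hz hxz, hK hy hz hyz⟩)

lemma IsClique.ncard_le_ncard_add_two [Finite V] (hK : G.IsClique K) (hF : G.IsFVS F) :
    K.ncard ≤ F.ncard + 2 := by
  have hKF : (G.removeVerts F).IsClique (K \ F) :=
    fun x hx y hy hxy => ⟨hK hx.1 hy.1 hxy, hx.2, hy.2⟩
  calc K.ncard ≤ (K \ F).ncard + F.ncard := Set.ncard_le_ncard_sdiff_add_ncard K F
    _ ≤ 2 + F.ncard := by gcongr; exact hF.ncard_le_two_of_isClique hKF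
    _ = F.ncard + 2 := add_comm _ _

lemma minFVS_eq_ncard (hF : G.IsFVS F) (hmin : ∀ F', G.IsFVS F' → F.ncard ≤ F'.ncard) :
    G.minFVS = F.ncard :=
  le_antisymm (Nat.sInf_le ⟨F, hF, rfl⟩)
    (le_csInf ⟨_, F, hF, rfl⟩ fun _ ⟨F', hF', hn⟩ => hn ▸ hmin F' hF')

lemma CkFree.adj_of_common_neighbors (hc4 : G.CkFree 4) (hab : a ≠ b) (hnab : ¬ G.Adj a b)
    (has : G.Adj a s) (hbs : G.Adj b s) (hat : G.Adj a t) (hbt : G.Adj b t) (hst : s ≠ t) :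
    G.Adj s t := by
  by_contra hnst
  refine hc4 ⟨![a, s, b, t], ?_, fun _ => trivial, ?_⟩
  · have := has.ne; have := hbs.ne; have := hat.ne; have := hbt.ne
    intro i j hij
    fin_cases i <;> fin_cases j <;> simp_all
  · have hnba : ¬ G.Adj b a := fun h => hnab h.symm
    have hnts : ¬ G.Adj t s := fun h => hnst h.symm
    intro i j
    fin_cases i <;> fin_cases j <;>
      simp [has, hat, hbs, hbt, has.symm, hat.symm, hbs.symm, hbt.symm, hnab, hnst,
        hnba, hnts]

lemma mem_of_adj_of_isCompOf_singleton (htriv : ∀ C, G.IsCompOf S C → ∃ v, C = {v})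
    {u w : V} (hu : u ∉ S) (huw : G.Adj u w) : w ∈ S := by
  by_contra hw
  obtain ⟨x, hx⟩ := htriv _ ⟨u, hu, rfl⟩
  have hux : u ∈ ({x} : Set V) := hx ▸ ⟨Reachable.refl u, hu⟩
  have hwx : w ∈ ({x} : Set V) := hx ▸ ⟨Adj.reachable ⟨huw, hu, hw⟩, hw⟩
  exact huw.ne (hux.trans hwx.symm)

lemma adj_of_reachable_removeVerts_sdiff_singleton (hind : ∀ ⦃u w⦄, u ∉ S → G.Adj u w → w ∈ S)
    (ha : a ∉ S) (hab : a ≠ b) (hr : (G.removeVerts (S \ {s})).Reachable a b) : G.Adj a s := by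
  obtain ⟨p⟩ := hr
  cases p with
  | nil => exact absurd rfl hab
  | cons hax _ =>
    obtain ⟨hax, -, hx⟩ := hax
    obtain rfl : _ = s := by_contra fun hne => hx ⟨hind ha hax, hne⟩
    exact hax

lemma isFVS_sdiff_singleton (hind : ∀ ⦃u w⦄, u ∉ S → G.Adj u w → w ∈ S) (v : V) :
    G.IsFVS (S \ {v}) :=
  isAcyclic_of_forall_adj_eq_or_eq fun _ _ ⟨hxy, hx, hy⟩ => by
    by_contra! h
    exact hy ⟨hind (fun hxS => hx ⟨hxS, h.1⟩) hxy, h.2⟩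

end SimpleGraph

theorem stmt12_general [Fintype V] (G : SimpleGraph V) (S : Set V)
    (hconn : G.Connected) (hc4 : G.CkFree 4)
    (hS : G.IsMinSep S)
    (htriv : ∀ C : Set V, G.IsCompOf S C → ∃ v, C = {v}) :
    G.minFVS = S.ncard - 1 ∧
    ∃ v ∈ S, G.IsFVS (S \ {v}) ∧ ∀ F : Set V, G.IsFVS F → (S \ {v}).ncard ≤ F.ncard := by
  obtain ⟨a, b, ha, hb, hnr, hmin⟩ := hS
  have hind : ∀ ⦃u w⦄, u ∉ S → G.Adj u w → w ∈ S := fun _ _ =>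
    SimpleGraph.mem_of_adj_of_isCompOf_singleton htriv
  have hab : a ≠ b := fun h => hnr (h ▸ SimpleGraph.Reachable.refl a)
  have hnab : ¬ G.Adj a b := fun h => hnr (SimpleGraph.Adj.reachable ⟨h, ha, hb⟩)
  have hSa : ∀ s ∈ S, G.Adj a s := fun s hs =>
    SimpleGraph.adj_of_reachable_removeVerts_sdiff_singleton hind ha hab
      (hmin _ (Set.sdiff_singleton_ssubset.2 hs))
  have hSb : ∀ s ∈ S, G.Adj b s := fun s hs =>
    SimpleGraph.adj_of_reachable_removeVerts_sdiff_singleton hind hb hab.symm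
      (hmin _ (Set.sdiff_singleton_ssubset.2 hs)).symm
  have hK : G.IsClique (insert a S) := SimpleGraph.isClique_insert.2
    ⟨fun s hs t ht => hc4.adj_of_common_neighbors hab hnab (hSa s hs) (hSb s hs) (hSa t ht)
      (hSb t ht), fun s hs _ => hSa s hs⟩
  obtain ⟨v, hv⟩ : S.Nonempty := Set.nonempty_iff_ne_empty.2 fun h =>
    hnr (by simpa [h] using hconn.preconnected a b)
  have hcard : (S \ {v}).ncard = S.ncard - 1 := Set.ncard_sdiff_singleton_of_mem hv
  have hlow : ∀ F, G.IsFVS F → (S \ {v}).ncard ≤ F.ncard := fun F hF => by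
    have := hK.ncard_le_ncard_add_two hF
    rw [Set.ncard_insert_of_notMem ha] at this
    omega
  have hfvs := SimpleGraph.isFVS_sdiff_singleton hind v
  exact ⟨(SimpleGraph.minFVS_eq_ncard hfvs hlow).trans hcard, v, hv, hfvs, hlow⟩

theorem stmt12 [Fintype V] (G : SimpleGraph V) (S : Set V)
    (hconn : G.Connected) (h2k2 : G.TwoK2Free) (hc4 : G.CkFree 4) (hc5 : G.CkFree 5)
    (hS : G.IsMinSep S)
    (htriv : ∀ C : Set V, G.IsCompOf S C → ∃ v, C = {v}) :
    G.minFVS = S.ncard - 1 ∧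
    ∃ v ∈ S, G.IsFVS (S \ {v}) ∧ ∀ F : Set V, G.IsFVS F → (S \ {v}).ncard ≤ F.ncard :=
  stmt12_general G S hconn hc4 hS htriv
end

section
/- Let G be a connected (2K_2, C_4)-free graph (a connected finite simple graph with no induced 2K_2 and no induced C_4) and let S be a minimal vertex separator of G. Then every independent set of the induced subgraph on S has at most two vertices, and the induced subgraph on S contains neither an induced path on 4 vertices nor an induced star K_{1,3}. -/
variable {V : Type*}

/-! Let `X`, `Y` be two full components of `G − S`. Two nonadjacent vertices of `S` cannot have
common neighbours in both `X` and `Y` (an induced `C₄`), but must have one in `X` or in `Y`: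
otherwise their private neighbours span two independent edges in `X` and in `Y`, an induced `2K₂`.
In an independent triple two of the three pairs then have their common neighbours on the same
side, and a `2K₂` appears. In an induced path `a b c d`, a neighbour of `a` on one side that misses
`d` is forced by `2K₂`- and `C₄`-freeness to make `a` and `c` have common neighbours on both sides;
up to reversing the path and swapping the sides, such a neighbour exists. -/

namespace SimpleGraph

variable {G : SimpleGraph V}

theorem TwoK2Free.adj_of_adj_of_adj (h : G.TwoK2Free) {a b c d : V}
    (hab : G.Adj a b) (hcd : G.Adj c d)
    (nac : ¬ G.Adj a c) (nad : ¬ G.Adj a d) (nbc : ¬ G.Adj b c) : G.Adj b d := by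
  by_contra nbd
  refine h ⟨a, b, c, d, hab.ne, ?_, ?_, ?_, ?_, hcd.ne, hab, hcd, nac, nad, nbc, nbd⟩ <;>
    rintro rfl
  exacts [nad hcd, nac hcd.symm, nbd hcd, nbc hcd.symm]

theorem CkFree.adj_of_cycle_four (h : G.CkFree 4) {a b c d : V} (hac : a ≠ c) (hbd : b ≠ d)
    (hab : G.Adj a b) (hbc : G.Adj b c) (hcd : G.Adj c d) (hda : G.Adj d a)
    (nac : ¬ G.Adj a c) : G.Adj b d := by
  by_contra nbd
  have := hab.ne; have := hbc.ne; have := hcd.ne; have := hda.ne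
  refine h ⟨![a, b, c, d], ?_, fun _ => trivial, ?_⟩
  · intro i j hij
    fin_cases i <;> fin_cases j <;> simp_all
  · intro i j
    fin_cases i <;> fin_cases j <;> simp [G.adj_comm, hda.symm, *]

/-- `X` and `Y` stand for two full components of `G − S`, which a minimal separator always has. -/
structure IsFullSeparation (G : SimpleGraph V) (S X Y : Set V) : Prop where
  disjoint_left : Disjoint S X
  disjoint_right : Disjoint S Y
  disjoint : Disjoint X Y
  not_adj : ∀ ⦃x⦄, x ∈ X → ∀ ⦃y⦄, y ∈ Y → ¬ G.Adj x y
  exists_adj_left : ∀ ⦃s⦄, s ∈ S → ∃ x ∈ X, G.Adj s x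
  exists_adj_right : ∀ ⦃s⦄, s ∈ S → ∃ y ∈ Y, G.Adj s y

namespace IsFullSeparation

variable {S X Y : Set V}

theorem symm (hs : G.IsFullSeparation S X Y) : G.IsFullSeparation S Y X where
  disjoint_left := hs.disjoint_right
  disjoint_right := hs.disjoint_left
  disjoint := hs.disjoint.symm
  not_adj _ hy _ hx h := hs.not_adj hx hy h.symm
  exists_adj_left := hs.exists_adj_right
  exists_adj_right := hs.exists_adj_left

theorem adj_of_mem_commonNeighbors (hs : G.IsFullSeparation S X Y) (hc4 : G.CkFree 4)
    {u v p q : V} (huv : u ≠ v) (hp : p ∈ X ∩ G.commonNeighbors u v)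
    (hq : q ∈ Y ∩ G.commonNeighbors u v) : G.Adj u v :=
  hc4.adj_of_cycle_four (hs.disjoint.ne_of_mem hp.1 hq.1) huv.symm hp.2.2.symm hq.2.2
    hq.2.1.symm hp.2.1 (hs.not_adj hp.1 hq.1) |>.symm

theorem nonempty_inter_commonNeighbors (hs : G.IsFullSeparation S X Y) (h2k2 : G.TwoK2Free)
    {u v : V} (hu : u ∈ S) (hv : v ∈ S) (nuv : ¬ G.Adj u v) :
    (X ∩ G.commonNeighbors u v).Nonempty ∨ (Y ∩ G.commonNeighbors u v).Nonempty := by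
  by_contra! ⟨hX, hY⟩
  simp only [Set.eq_empty_iff_forall_notMem, Set.mem_inter_iff, mem_commonNeighbors] at hX hY
  obtain ⟨ux, hux, aux⟩ := hs.exists_adj_left hu
  obtain ⟨vx, hvx, avx⟩ := hs.exists_adj_left hv
  obtain ⟨uy, huy, auy⟩ := hs.exists_adj_right hu
  obtain ⟨vy, hvy, avy⟩ := hs.exists_adj_right hv
  have exy : G.Adj ux vx := h2k2.adj_of_adj_of_adj aux avx nuv (fun h => hX vx ⟨hvx, h, avx⟩)
    (fun h => hX ux ⟨hux, aux, h.symm⟩)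
  have eyy : G.Adj uy vy := h2k2.adj_of_adj_of_adj auy avy nuv (fun h => hY vy ⟨hvy, h, avy⟩)
    (fun h => hY uy ⟨huy, auy, h.symm⟩)
  exact hs.not_adj hvx hvy <| h2k2.adj_of_adj_of_adj exy eyy (hs.not_adj hux huy)
    (hs.not_adj hux hvy) (hs.not_adj hvx huy)

theorem false_of_indep_of_commonNeighbors (hs : G.IsFullSeparation S X Y) (h2k2 : G.TwoK2Free)
    (hc4 : G.CkFree 4) {u v w p p' : V} (hv : v ∈ S) (hw : w ∈ S)
    (huv : u ≠ v) (huw : u ≠ w) (hvw : v ≠ w)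
    (nuv : ¬ G.Adj u v) (nuw : ¬ G.Adj u w) (nvw : ¬ G.Adj v w)
    (hp : p ∈ X ∩ G.commonNeighbors u v) (hp' : p' ∈ X ∩ G.commonNeighbors v w) : False := by
  by_cases huwY : (Y ∩ G.commonNeighbors u w).Nonempty
  · obtain ⟨r, hr⟩ := huwY
    have nvr : ¬ G.Adj v r := fun h =>
      nuv (hs.adj_of_mem_commonNeighbors hc4 huv hp ⟨hr.1, hr.2.1, h⟩)
    have nup' : ¬ G.Adj u p' := fun h =>
      nuw (hs.adj_of_mem_commonNeighbors hc4 huw ⟨hp'.1, h, hp'.2.2⟩ hr)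
    exact hs.not_adj hp'.1 hr.1 <|
      (h2k2.adj_of_adj_of_adj hr.2.1 hp'.2.1 nuv nup' (fun h => nvr h.symm)).symm
  · obtain ⟨vy, hvy, avy⟩ := hs.exists_adj_right hv
    obtain ⟨wy, hwy, awy⟩ := hs.exists_adj_right hw
    have nvwy : ¬ G.Adj v wy := fun h =>
      nvw (hs.adj_of_mem_commonNeighbors hc4 hvw hp' ⟨hwy, h, awy⟩)
    have nwvy : ¬ G.Adj w vy := fun h =>
      nvw (hs.adj_of_mem_commonNeighbors hc4 hvw hp' ⟨hvy, avy, h⟩)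
    have evy : G.Adj vy wy :=
      h2k2.adj_of_adj_of_adj avy awy nvw nvwy (fun h => nwvy h.symm)
    have nuvy : ¬ G.Adj u vy := fun h =>
      nuv (hs.adj_of_mem_commonNeighbors hc4 huv hp ⟨hvy, h, avy⟩)
    have nuwy : ¬ G.Adj u wy := fun h => huwY ⟨wy, hwy, h, awy⟩
    exact hs.not_adj hp.1 hwy <| h2k2.adj_of_adj_of_adj hp.2.1 evy nuvy nuwy (hs.not_adj hp.1 hvy)

theorem false_of_indep_triple (hs : G.IsFullSeparation S X Y) (h2k2 : G.TwoK2Free)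
    (hc4 : G.CkFree 4) {u v w : V} (hu : u ∈ S) (hv : v ∈ S) (hw : w ∈ S)
    (huv : u ≠ v) (huw : u ≠ w) (hvw : v ≠ w)
    (nuv : ¬ G.Adj u v) (nuw : ¬ G.Adj u w) (nvw : ¬ G.Adj v w) : False := by
  -- each pair has common neighbours on some side; two of the three pairs share a side
  have nvu : ¬ G.Adj v u := fun h => nuv h.symm
  have nwv : ¬ G.Adj w v := fun h => nvw h.symm
  rcases hs.nonempty_inter_commonNeighbors h2k2 hu hv nuv with ⟨p, hp⟩ | ⟨p, hp⟩ <;>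
    rcases hs.nonempty_inter_commonNeighbors h2k2 hv hw nvw with ⟨q, hq⟩ | ⟨q, hq⟩
  · exact hs.false_of_indep_of_commonNeighbors h2k2 hc4 hv hw huv huw hvw nuv nuw nvw hp hq
  · rcases hs.nonempty_inter_commonNeighbors h2k2 hu hw nuw with ⟨r, hr⟩ | ⟨r, hr⟩
    · exact hs.false_of_indep_of_commonNeighbors h2k2 hc4 hu hw huv.symm hvw huw nvu nvw nuw
        (G.commonNeighbors_symm u v ▸ hp) hr
    · exact hs.symm.false_of_indep_of_commonNeighbors h2k2 hc4 hw hv huw huv hvw.symm nuw nuv nwv hr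
        (G.commonNeighbors_symm v w ▸ hq)
  · rcases hs.nonempty_inter_commonNeighbors h2k2 hu hw nuw with ⟨r, hr⟩ | ⟨r, hr⟩
    · exact hs.false_of_indep_of_commonNeighbors h2k2 hc4 hw hv huw huv hvw.symm nuw nuv nwv hr
        (G.commonNeighbors_symm v w ▸ hq)
    · exact hs.symm.false_of_indep_of_commonNeighbors h2k2 hc4 hu hw huv.symm hvw huw nvu nvw nuw
        (G.commonNeighbors_symm u v ▸ hp) hr
  · exact hs.symm.false_of_indep_of_commonNeighbors h2k2 hc4 hv hw huv huw hvw nuv nuw nvw hp hq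

theorem false_of_path_of_adj_of_not_adj (hs : G.IsFullSeparation S X Y) (h2k2 : G.TwoK2Free)
    (hc4 : G.CkFree 4) {a b c d x : V} (hb : b ∈ S) (hc : c ∈ S) (hd : d ∈ S)
    (hac : a ≠ c) (hbd : b ≠ d) (hab : G.Adj a b) (hbc : G.Adj b c) (hcd : G.Adj c d)
    (nac : ¬ G.Adj a c) (nad : ¬ G.Adj a d) (nbd : ¬ G.Adj b d)
    (hx : x ∈ X) (hxa : G.Adj x a) (nxd : ¬ G.Adj x d) : False := by
  have hxc : G.Adj x c := h2k2.adj_of_adj_of_adj hxa.symm hcd.symm nad nac nxd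
  have hxb : G.Adj x b := hc4.adj_of_cycle_four hac (hs.disjoint_left.ne_of_mem hb hx).symm
    hxa.symm hxc hbc.symm hab.symm nac
  obtain ⟨y, hy, hdy⟩ := hs.exists_adj_right hd
  have nyx : ¬ G.Adj y x := fun h => hs.not_adj hx hy h.symm
  have hya : G.Adj y a :=
    h2k2.adj_of_adj_of_adj hdy hxa (fun h => nxd h.symm) (fun h => nad h.symm) nyx
  have hyb : G.Adj y b :=
    h2k2.adj_of_adj_of_adj hdy hxb (fun h => nxd h.symm) (fun h => nbd h.symm) nyx
  have hyc : G.Adj y c := hc4.adj_of_cycle_four hbd (hs.disjoint_right.ne_of_mem hc hy).symm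
    hyb.symm hdy.symm hcd.symm hbc.symm nbd
  exact nac <|
    hs.adj_of_mem_commonNeighbors hc4 hac ⟨hx, hxa.symm, hxc.symm⟩ ⟨hy, hya.symm, hyc.symm⟩

theorem false_of_inducedP4 (hs : G.IsFullSeparation S X Y) (h2k2 : G.TwoK2Free)
    (hc4 : G.CkFree 4) {a b c d : V} (ha : a ∈ S) (hb : b ∈ S) (hc : c ∈ S) (hd : d ∈ S)
    (hac : a ≠ c) (had : a ≠ d) (hbd : b ≠ d) (hab : G.Adj a b) (hbc : G.Adj b c)
    (hcd : G.Adj c d) (nac : ¬ G.Adj a c) (nad : ¬ G.Adj a d) (nbd : ¬ G.Adj b d) : False := by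
  obtain ⟨x, hx, hax⟩ := hs.exists_adj_left ha
  by_cases hxd : G.Adj x d
  · obtain ⟨y, hy, hdy⟩ := hs.exists_adj_right hd
    by_cases hya : G.Adj y a
    · exact nad (hs.adj_of_mem_commonNeighbors hc4 had ⟨hx, hax, hxd.symm⟩ ⟨hy, hya.symm, hdy⟩)
    · exact hs.symm.false_of_path_of_adj_of_not_adj h2k2 hc4 hc hb ha hbd.symm hac.symm
        hcd.symm hbc.symm hab.symm (fun h => nbd h.symm) (fun h => nad h.symm)
        (fun h => nac h.symm) hy hdy.symm hya
  · exact hs.false_of_path_of_adj_of_not_adj h2k2 hc4 hb hc hd hac hbd hab hbc hcd nac nad nbd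
      hx hax.symm hxd

end IsFullSeparation

theorem exists_adj_of_reachable_removeVerts_sdiff_singleton {S : Set V} {s u b : V}
    (h : (G.removeVerts (S \ {s})).Reachable u b) (hu : u ∉ S)
    (hub : ¬ (G.removeVerts S).Reachable u b) :
    ∃ c, (G.removeVerts S).Reachable u c ∧ c ∉ S ∧ G.Adj s c := by
  obtain ⟨W⟩ := h
  induction W with
  | nil => exact absurd .rfl hub
  | @cons u x b hux _ ih =>
    obtain ⟨hux, -, hx⟩ := hux
    by_cases hxs : x = s
    · exact ⟨u, .rfl, hu, hxs ▸ hux.symm⟩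
    · have hux' : (G.removeVerts S).Adj u x := ⟨hux, hu, fun h => hx ⟨h, hxs⟩⟩
      obtain ⟨c, hxc, hc, hsc⟩ := ih hux'.2.2 fun h => hub (hux'.reachable.trans h)
      exact ⟨c, hux'.reachable.trans hxc, hc, hsc⟩

theorem IsMinSep.exists_isFullSeparation {S : Set V} (hS : G.IsMinSep S) :
    ∃ X Y, G.IsFullSeparation S X Y := by
  obtain ⟨a, b, ha, hb, hab, hmin⟩ := hS
  have hmin' (s : V) (hs : s ∈ S) := hmin _ (Set.sdiff_singleton_ssubset.2 hs)
  refine ⟨{v | (G.removeVerts S).Reachable a v ∧ v ∉ S},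
    {v | (G.removeVerts S).Reachable b v ∧ v ∉ S}, ?_, ?_, ?_, ?_, ?_, ?_⟩
  · exact Set.disjoint_left.2 fun s hs hsX => hsX.2 hs
  · exact Set.disjoint_left.2 fun s hs hsY => hsY.2 hs
  · exact Set.disjoint_left.2 fun v hvX hvY => hab (hvX.1.trans hvY.1.symm)
  · intro x hx y hy hxy
    have hxy' : (G.removeVerts S).Adj x y := ⟨hxy, hx.2, hy.2⟩
    exact hab (hx.1.trans (hxy'.reachable.trans hy.1.symm))
  · intro s hs
    obtain ⟨c, hac, hc, hsc⟩ :=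
      exists_adj_of_reachable_removeVerts_sdiff_singleton (hmin' s hs) ha hab
    exact ⟨c, ⟨hac, hc⟩, hsc⟩
  · intro s hs
    obtain ⟨c, hbc, hc, hsc⟩ :=
      exists_adj_of_reachable_removeVerts_sdiff_singleton (hmin' s hs).symm hb (hab ·.symm)
    exact ⟨c, ⟨hbc, hc⟩, hsc⟩

end SimpleGraph

theorem stmt19_general (G : SimpleGraph V) (S : Set V)
    (h2k2 : G.TwoK2Free) (hc4 : G.CkFree 4)
    (hS : G.IsMinSep S) :
    (∀ A : Set V, A ⊆ S → (∀ u ∈ A, ∀ v ∈ A, ¬ G.Adj u v) → A.ncard ≤ 2) ∧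
    (¬ ∃ a b c d : V, a ∈ S ∧ b ∈ S ∧ c ∈ S ∧ d ∈ S ∧
      a ≠ b ∧ a ≠ c ∧ a ≠ d ∧ b ≠ c ∧ b ≠ d ∧ c ≠ d ∧
      G.Adj a b ∧ G.Adj b c ∧ G.Adj c d ∧ ¬ G.Adj a c ∧ ¬ G.Adj a d ∧ ¬ G.Adj b d) ∧
    (¬ ∃ x a b c : V, x ∈ S ∧ a ∈ S ∧ b ∈ S ∧ c ∈ S ∧
      x ≠ a ∧ x ≠ b ∧ x ≠ c ∧ a ≠ b ∧ a ≠ c ∧ b ≠ c ∧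
      G.Adj x a ∧ G.Adj x b ∧ G.Adj x c ∧ ¬ G.Adj a b ∧ ¬ G.Adj a c ∧ ¬ G.Adj b c) := by
  obtain ⟨X, Y, hs⟩ := hS.exists_isFullSeparation
  refine ⟨fun A hAS hA => ?_, ?_, ?_⟩
  · by_contra! hcard
    obtain ⟨u, v, w, hu, hv, hw, huv, huw, hvw⟩ :=
      (Set.two_lt_ncard_iff (Set.finite_of_ncard_pos (by omega))).1 hcard
    exact hs.false_of_indep_triple h2k2 hc4 (hAS hu) (hAS hv) (hAS hw) huv huw hvw
      (hA u hu v hv) (hA u hu w hw) (hA v hv w hw)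
  · rintro ⟨a, b, c, d, ha, hb, hc, hd, -, hac, had, -, hbd, -, hab, hbc, hcd, nac, nad, nbd⟩
    exact hs.false_of_inducedP4 h2k2 hc4 ha hb hc hd hac had hbd hab hbc hcd nac nad nbd
  · rintro ⟨-, a, b, c, -, ha, hb, hc, -, -, -, hab, hac, hbc, -, -, -, nab, nac, nbc⟩
    exact hs.false_of_indep_triple h2k2 hc4 ha hb hc hab hac hbc nab nac nbc

theorem stmt19 [Fintype V] (G : SimpleGraph V) (S : Set V)
    (hconn : G.Connected) (h2k2 : G.TwoK2Free) (hc4 : G.CkFree 4)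
    (hS : G.IsMinSep S) :
    (∀ A : Set V, A ⊆ S → (∀ u ∈ A, ∀ v ∈ A, ¬ G.Adj u v) → A.ncard ≤ 2) ∧
    (¬ ∃ a b c d : V, a ∈ S ∧ b ∈ S ∧ c ∈ S ∧ d ∈ S ∧
      a ≠ b ∧ a ≠ c ∧ a ≠ d ∧ b ≠ c ∧ b ≠ d ∧ c ≠ d ∧
      G.Adj a b ∧ G.Adj b c ∧ G.Adj c d ∧ ¬ G.Adj a c ∧ ¬ G.Adj a d ∧ ¬ G.Adj b d) ∧
    (¬ ∃ x a b c : V, x ∈ S ∧ a ∈ S ∧ b ∈ S ∧ c ∈ S ∧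
      x ≠ a ∧ x ≠ b ∧ x ≠ c ∧ a ≠ b ∧ a ≠ c ∧ b ≠ c ∧
      G.Adj x a ∧ G.Adj x b ∧ G.Adj x c ∧ ¬ G.Adj a b ∧ ¬ G.Adj a c ∧ ¬ G.Adj b c) :=
  stmt19_general G S h2k2 hc4 hS
end
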